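/- Let (V, g) be a real inner product space of dimension 2n ≥ 4 with an orthogonal complex structure J (J² = −Id, g(JX,JY) = g(X,Y)), let ξ ∈ V be a unit vector, and let u, v be real numbers. Put η(X) = g(ξ,X), η̃(X) = g(Jξ,X), define the symmetric bilinear form h′ = e^{2u}·( g − (e^{2v} + 1)(η⊗η + η̃⊗η̃) ), set ξ′ = e^{−(u+v)}·ξ, η′(X) = h′(ξ′,X), η̃′(X) = h′(Jξ′,X) (so that η′ = −e^{u+v}η, η̃′ = −e^{u+v}η̃ and h′(ξ′,ξ′) = −1). Let π, Φ₁, Φ₂, Ψ be the (1,3)-tensors on V built from (g, η, η̃, ξ, J) by the formulas 4π(X,Y)Z = g(Y,Z)X − g(X,Z)Y − 2g(JX,Y)JZ + g(JY,Z)JX − g(JX,Z)JY; 8Φ₁(X,Y)Z = g(Y,Z)(η(X)ξ + η̃(X)Jξ) − g(X,Z)(η(Y)ξ + η̃(Y)Jξ) + g(JY,Z)(η(X)Jξ − η̃(X)ξ) − g(JX,Z)(η(Y)Jξ − η̃(Y)ξ) − 2g(JX,Y)(η(Z)Jξ − η̃(Z)ξ); 8Φ₂(X,Y)Z = (η(Y)η(Z)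 + η̃(Y)η̃(Z))X − (η(X)η(Z) + η̃(X)η̃(Z))Y + (η(Y)η̃(Z) − η̃(Y)η(Z))JX − (η(X)η̃(Z) − η̃(X)η(Z))JY − 2(η(X)η̃(Y) − η̃(X)η(Y))JZ; Ψ(X,Y)Z = (η(X)η̃(Y) − η̃(X)η(Y))·(η̃(Z)ξ − η(Z)Jξ); and let π′, Φ′₁, Φ′₂, Ψ′ be defined by the same formulas with (h′, η′, η̃′, ξ′, J) in place of (g, η, η̃, ξ, J). Then, with Φ = Φ₁ + Φ₂ and Φ′ = Φ′₁ + Φ′₂, the following identities hold as (1,3)-tensors: π′ + 2Φ′ + Ψ′ = e^{2u}(π − 2Φ + Ψ); Φ′₁ + (1/2)Ψ′ = −e^{2u}(Φ₁ − (1/2)Ψ); Φ′₂ + (1/2)Ψ′ = e^{2(u+v)}(Φ₂ − (1/2)Ψ); Ψ′ = −e^{2(u+v)}Ψ. -/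
import Mathlib


open scoped RealInnerProductSpace

noncomputable section

/-- The (1,3)-tensor `π` built from a bilinear form `b` and an endomorphism `J`:
`4π(X,Y)Z = b(Y,Z)X − b(X,Z)Y − 2b(JX,Y)JZ + b(JY,Z)JX − b(JX,Z)JY`. -/
def piT {V : Type*} [AddCommGroup V] [Module ℝ V]
    (b : V → V → ℝ) (J : V → V) (X Y Z : V) : V :=
  (1 / 4 : ℝ) • (b Y Z • X - b X Z • Y - (2 * b (J X) Y) • J Z
    + b (J Y) Z • J X - b (J X) Z • J Y)

/-- The (1,3)-tensor `Φ₁` built from `(b, J, ξ)`, with `η(X) = b(ξ,X)`,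
`η̃(X) = b(Jξ,X)`. -/
def Phi1T {V : Type*} [AddCommGroup V] [Module ℝ V]
    (b : V → V → ℝ) (J : V → V) (ξ : V) (X Y Z : V) : V :=
  (1 / 8 : ℝ) • (b Y Z • (b ξ X • ξ + b (J ξ) X • J ξ)
    - b X Z • (b ξ Y • ξ + b (J ξ) Y • J ξ)
    + b (J Y) Z • (b ξ X • J ξ - b (J ξ) X • ξ)
    - b (J X) Z • (b ξ Y • J ξ - b (J ξ) Y • ξ)
    - (2 * b (J X) Y) • (b ξ Z • J ξ - b (J ξ) Z • ξ))

/-- The (1,3)-tensor `Φ₂` built from `(b, J, ξ)`. -/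
def Phi2T {V : Type*} [AddCommGroup V] [Module ℝ V]
    (b : V → V → ℝ) (J : V → V) (ξ : V) (X Y Z : V) : V :=
  (1 / 8 : ℝ) • ((b ξ Y * b ξ Z + b (J ξ) Y * b (J ξ) Z) • X
    - (b ξ X * b ξ Z + b (J ξ) X * b (J ξ) Z) • Y
    + (b ξ Y * b (J ξ) Z - b (J ξ) Y * b ξ Z) • J X
    - (b ξ X * b (J ξ) Z - b (J ξ) X * b ξ Z) • J Y
    - (2 * (b ξ X * b (J ξ) Y - b (J ξ) X * b ξ Y)) • J Z)

/-- The (1,3)-tensor `Ψ` built from `(b, J, ξ)`: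
`Ψ(X,Y)Z = (η(X)η̃(Y) − η̃(X)η(Y))·(η̃(Z)ξ − η(Z)Jξ)`. -/
def PsiT {V : Type*} [AddCommGroup V] [Module ℝ V]
    (b : V → V → ℝ) (J : V → V) (ξ : V) (X Y Z : V) : V :=
  (b ξ X * b (J ξ) Y - b (J ξ) X * b ξ Y) • (b (J ξ) Z • ξ - b ξ Z • J ξ)

set_option maxHeartbeats 4000000 in
/-- the tensor identities (4.8) relating the
`U(n−1)×U(1)`-invariant curvature-type tensors of `(g, J, ξ)` and of the
associated Kähler–Lorentz structure
`h′ = e^{2u}( g − (e^{2v}+1)(η⊗η + η̃⊗η̃) )` with `ξ′ = e^{−(u+v)}ξ`: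
`π′ + 2Φ′ + Ψ′ = e^{2u}(π − 2Φ + Ψ)`, `Φ′₁ + ½Ψ′ = −e^{2u}(Φ₁ − ½Ψ)`,
`Φ′₂ + ½Ψ′ = e^{2(u+v)}(Φ₂ − ½Ψ)`, `Ψ′ = −e^{2(u+v)}Ψ`, where moreover
`h′(ξ′,ξ′) = −1`, `η′ = −e^{u+v}η`, `η̃′ = −e^{u+v}η̃`. -/
theorem tensor_identities {V : Type*} [NormedAddCommGroup V]
    [InnerProductSpace ℝ V] [FiniteDimensional ℝ V]
    (n : ℕ) (hn : 2 ≤ n) (hdim : Module.finrank ℝ V = 2 * n)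
    (J : V →ₗ[ℝ] V) (hJ2 : ∀ X : V, J (J X) = -X)
    (hJiso : ∀ X Y : V, ⟪J X, J Y⟫ = ⟪X, Y⟫)
    (ξ : V) (hξ : ‖ξ‖ = 1) (u v : ℝ)
    (g : V → V → ℝ) (hg : ∀ X Y : V, g X Y = ⟪X, Y⟫)
    (h' : V → V → ℝ)
    (hh' : ∀ X Y : V, h' X Y = Real.exp (2 * u) * (g X Y
      - (Real.exp (2 * v) + 1) * (g ξ X * g ξ Y + g (J ξ) X * g (J ξ) Y)))
    (ξ' : V) (hξ' : ξ' = Real.exp (-(u + v)) • ξ) :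
    (h' ξ' ξ' = -1) ∧
    (∀ X : V, h' ξ' X = -(Real.exp (u + v)) * g ξ X) ∧
    (∀ X : V, h' (J ξ') X = -(Real.exp (u + v)) * g (J ξ) X) ∧
    (∀ X Y Z : V,
      piT h' (⇑J) X Y Z
          + (2 : ℝ) • (Phi1T h' (⇑J) ξ' X Y Z + Phi2T h' (⇑J) ξ' X Y Z)
          + PsiT h' (⇑J) ξ' X Y Z
        = Real.exp (2 * u) • (piT g (⇑J) X Y Z
            - (2 : ℝ) • (Phi1T g (⇑J) ξ X Y Z + Phi2T g (⇑J) ξ X Y Z)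
            + PsiT g (⇑J) ξ X Y Z)) ∧
    (∀ X Y Z : V,
      Phi1T h' (⇑J) ξ' X Y Z + (1 / 2 : ℝ) • PsiT h' (⇑J) ξ' X Y Z
        = (-(Real.exp (2 * u))) •
            (Phi1T g (⇑J) ξ X Y Z - (1 / 2 : ℝ) • PsiT g (⇑J) ξ X Y Z)) ∧
    (∀ X Y Z : V,
      Phi2T h' (⇑J) ξ' X Y Z + (1 / 2 : ℝ) • PsiT h' (⇑J) ξ' X Y Z
        = Real.exp (2 * (u + v)) •
            (Phi2T g (⇑J) ξ X Y Z - (1 / 2 : ℝ) • PsiT g (⇑J) ξ X Y Z)) ∧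
    (∀ X Y Z : V,
      PsiT h' (⇑J) ξ' X Y Z
        = (-(Real.exp (2 * (u + v)))) • PsiT g (⇑J) ξ X Y Z) := by
  have ha := Real.exp_ne_zero u
  have hb := Real.exp_ne_zero v
  have he2u : Real.exp (2*u) = Real.exp u * Real.exp u := by
    rw [two_mul, Real.exp_add]
  have he2v : Real.exp (2*v) = Real.exp v * Real.exp v := by
    rw [two_mul, Real.exp_add]
  have hesum : Real.exp (u+v) = Real.exp u * Real.exp v := Real.exp_add u v
  have heneg : Real.exp (-(u+v)) = (Real.exp u * Real.exp v)⁻¹ := by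
    rw [Real.exp_neg, Real.exp_add]
  have he2uv : Real.exp (2*(u+v)) = Real.exp u * Real.exp v * (Real.exp u * Real.exp v) := by
    rw [two_mul, Real.exp_add, Real.exp_add]
  have hξξ : ⟪ξ, ξ⟫ = 1 := by
    rw [real_inner_self_eq_norm_sq, hξ]; norm_num
  have hskew : ∀ X : V, ⟪ξ, J X⟫ = -⟪J ξ, X⟫ := by
    intro X
    have h := hJiso (J ξ) X
    rw [hJ2, inner_neg_left] at h
    linarith
  have hJJ : ∀ X : V, ⟪J ξ, J X⟫ = ⟪ξ, X⟫ := fun X => hJiso ξ X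
  have hξJξ : ⟪ξ, J ξ⟫ = 0 := by
    have h := hskew ξ
    have h2 : ⟪J ξ, ξ⟫ = ⟪ξ, J ξ⟫ := real_inner_comm _ _
    linarith
  have hJξξ : ⟪J ξ, ξ⟫ = 0 := by rw [real_inner_comm, hξJξ]
  have hJξJξ : ⟪J ξ, J ξ⟫ = 1 := by rw [hJJ, hξξ]
  refine ⟨?_, ?_, ?_, ?_, ?_, ?_, ?_⟩
  · rw [hξ']
    simp only [hh', hg, real_inner_smul_left, real_inner_smul_right, hξξ, hξJξ, hJξξ,
      he2u, he2v, heneg]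
    field_simp
    ring
  · intro X
    rw [hξ']
    simp only [hh', hg, real_inner_smul_left, real_inner_smul_right, hξξ, hξJξ, hJξξ,
      he2u, he2v, heneg, hesum]
    field_simp
    ring
  · intro X
    rw [hξ', map_smul]
    simp only [hh', hg, real_inner_smul_left, real_inner_smul_right, hξξ, hξJξ, hJξξ,
      hJξJξ, he2u, he2v, heneg, hesum, smul_eq_mul]
    field_simp
    ring
  all_goals
    intro X Y Z
    simp only [piT, Phi1T, Phi2T, PsiT, hξ', map_smul]
    simp only [hh', hg, real_inner_smul_left, real_inner_smul_right, hskew, hJJ, hξξ,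
      hξJξ, hJξξ, hJξJξ, he2u, he2v, heneg, hesum, he2uv, smul_eq_mul]
    match_scalars <;> field_simp <;> ring

end
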